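/- arXiv:1803.02705 — 8 statements merged into one kernel-verified Lean document; each statement's English description precedes it below -/
import Mathlib

section
/- A vector v ∈ ℝ^m × ℝ^r is a recession direction of the BCC production possibility set T (i.e., (X,Y) + t·v ∈ T for every (X,Y) ∈ T and every t ≥ 0) if and only if v is a nonnegative linear combination of the vectors d_k = (e_k, 0), k = 1,…,m, and g_i = (0, −e_i), i = 1,…,r. -/
open Finset

/-- The BCC production possibility set generated by units with inputs `X j` and outputs `Y j`. -/
def BCC {ι : Type*} [Fintype ι] {m r : ℕ} (X : ι → Fin m → ℝ) (Y : ι → Fin r → ℝ) :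
    Set ((Fin m → ℝ) × (Fin r → ℝ)) :=
  {p | ∃ l : ι → ℝ, (∀ j, 0 ≤ l j) ∧ (∑ j, l j = 1) ∧
    (∀ k, ∑ j, l j * X j k ≤ p.1 k) ∧ (∀ i, p.2 i ≤ ∑ j, l j * Y j i)}

lemma sum_pair_eq {m r : ℕ} (α : Fin m → ℝ) (β : Fin r → ℝ) :
    (∑ k, α k • ((Pi.single k (1 : ℝ), 0) : (Fin m → ℝ) × (Fin r → ℝ)) +
      ∑ i, β i • ((0, -Pi.single i (1 : ℝ)) : (Fin m → ℝ) × (Fin r → ℝ)))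
      = ((fun k => α k), (fun i => -β i)) := by
  apply Prod.ext
  · simp only [Prod.fst_add, Prod.fst_sum, Prod.smul_mk, Prod.mk_add_mk]
    funext k
    simp [Pi.single_apply, Finset.sum_ite_eq', mul_comm]
  · simp only [Prod.snd_add, Prod.snd_sum, Prod.smul_mk, Prod.mk_add_mk]
    funext i
    simp [Pi.single_apply, Finset.sum_ite_eq', mul_comm]

/-- A vector `v` is a recession direction of the BCC production possibility set if and only if
it is a nonnegative linear combination of the vectors `d k = (e k, 0)` and `g i = (0, -e i)`. -/
theorem bcc_recession_iff (m r n : ℕ) (hn : 1 ≤ n)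
    (X : Fin n → Fin m → ℝ) (Y : Fin n → Fin r → ℝ)
    (hX : ∀ j k, 0 ≤ X j k) (hY : ∀ j i, 0 ≤ Y j i)
    (v : (Fin m → ℝ) × (Fin r → ℝ)) :
    (∀ p ∈ BCC X Y, ∀ t : ℝ, 0 ≤ t → p + t • v ∈ BCC X Y) ↔
      ∃ α : Fin m → ℝ, ∃ β : Fin r → ℝ,
        (∀ k, 0 ≤ α k) ∧ (∀ i, 0 ≤ β i) ∧
        v = ∑ k, α k • ((Pi.single k (1 : ℝ), 0) : (Fin m → ℝ) × (Fin r → ℝ)) +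
            ∑ i, β i • ((0, -Pi.single i (1 : ℝ)) : (Fin m → ℝ) × (Fin r → ℝ)) := by
  constructor
  · intro hrec
    set j0 : Fin n := ⟨0, hn⟩
    have hp0 : ((X j0, Y j0) : (Fin m → ℝ) × (Fin r → ℝ)) ∈ BCC X Y := by
      refine ⟨fun j => if j = j0 then 1 else 0, ?_, ?_, ?_, ?_⟩
      · intro j; positivity
      · simp
      · intro k; simp [ite_mul]
      · intro i; simp [ite_mul]
    have hv1 : ∀ k, 0 ≤ v.1 k := by
      intro k
      by_contra h
      push_neg at h
      set t : ℝ := (X j0 k + 1) / (-v.1 k) with ht_def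
      have ht : 0 ≤ t := by
        apply div_nonneg
        · have := hX j0 k; linarith
        · linarith
      obtain ⟨l, hl0, hl1, hlX, hlY⟩ := hrec _ hp0 t ht
      have h1 := hlX k
      have h2 : (0:ℝ) ≤ ∑ j, l j * X j k :=
        Finset.sum_nonneg fun j _ => mul_nonneg (hl0 j) (hX j k)
      have h3 : ((X j0, Y j0) + t • v).1 k = X j0 k + t * v.1 k := rfl
      have h4 : t * v.1 k = -(X j0 k + 1) := by
        have hne : v.1 k ≠ 0 := ne_of_lt h
        rw [ht_def, div_mul_eq_mul_div, div_neg, mul_div_assoc, div_self hne, mul_one]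
      rw [h3, h4] at h1
      linarith
    have hv2 : ∀ i, v.2 i ≤ 0 := by
      intro i
      by_contra h
      push_neg at h
      have hS : Y j0 i ≤ ∑ j, Y j i :=
        Finset.single_le_sum (fun j _ => hY j i) (Finset.mem_univ j0)
      set t : ℝ := (∑ j, Y j i - Y j0 i + 1) / v.2 i with ht_def
      have ht : 0 ≤ t := by
        apply div_nonneg
        · linarith
        · linarith
      obtain ⟨l, hl0, hl1, hlX, hlY⟩ := hrec _ hp0 t ht
      have h1 := hlY i
      have hlle : ∀ j, l j ≤ 1 := by
        intro j
        calc l j ≤ ∑ j', l j' := Finset.single_le_sum (fun j' _ => hl0 j') (Finset.mem_univ j)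
        _ = 1 := hl1
      have h2 : ∑ j, l j * Y j i ≤ ∑ j, Y j i := by
        apply Finset.sum_le_sum
        intro j _
        nlinarith [hl0 j, hlle j, hY j i]
      have h3 : ((X j0, Y j0) + t • v).2 i = Y j0 i + t * v.2 i := rfl
      have h4 : t * v.2 i = ∑ j, Y j i - Y j0 i + 1 := by
        have hne : v.2 i ≠ 0 := ne_of_gt h
        rw [ht_def]
        field_simp
      rw [h3, h4] at h1
      linarith
    refine ⟨v.1, fun i => -v.2 i, hv1, fun i => neg_nonneg.mpr (hv2 i), ?_⟩
    rw [sum_pair_eq]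
    apply Prod.ext <;> simp
  · rintro ⟨α, β, hα, hβ, hv⟩ p ⟨l, hl0, hl1, hlX, hlY⟩ t ht
    rw [sum_pair_eq] at hv
    refine ⟨l, hl0, hl1, ?_, ?_⟩
    · intro k
      have h1 : (p + t • v).1 k = p.1 k + t * v.1 k := rfl
      have h2 : v.1 k = α k := by rw [hv]
      rw [h1, h2]
      have := mul_nonneg ht (hα k)
      linarith [hlX k]
    · intro i
      have h1 : (p + t • v).2 i = p.2 i + t * v.2 i := rfl
      have h2 : v.2 i = -β i := by rw [hv]
      rw [h1, h2]
      have := mul_nonneg ht (hβ i)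
      have := hlY i
      nlinarith
end

section
/- Only vectors of the forms d_k = (e_k, 0), k = 1,…,m, and g_i = (0, −e_i), i = 1,…,r, up to positive scalar multiples, can be direction vectors of infinite edges of the BCC production possibility set T: if F ⊆ T is a face of T (i.e., F is an extreme subset of T) of the form F = {p + t·v : t ≥ 0} for some p ∈ T and some nonzero v ∈ ℝ^m × ℝ^r, then there exists c > 0 such that v = c·d_k for some k ∈ {1,…,m} or v = c·g_i for some i ∈ {1,…,r}. -/
open Finset

theorem IsExtreme.eq_of_add_mem_of_add_sub_mem {𝕜 E : Type*} [Field 𝕜] [LinearOrder 𝕜]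
    [IsStrictOrderedRing 𝕜] [AddCommGroup E] [Module 𝕜 E] {S : Set E} {p v a : E}
    (h : IsExtreme 𝕜 S {q | ∃ t : 𝕜, 0 ≤ t ∧ q = p + t • v})
    (ha : p + a ∈ S) (hb : p + (v - a) ∈ S) (f : E →ₗ[𝕜] 𝕜) (hfa : f a = f v) (hfv : f v ≠ 0) :
    v = a := by
  have hmid : p + (2⁻¹ : 𝕜) • v ∈ openSegment 𝕜 (p + a) (p + (v - a)) :=
    ⟨2⁻¹, 2⁻¹, by norm_num, by norm_num, by norm_num, by module⟩
  obtain ⟨s, -, hs⟩ := h.right_mem_of_mem_openSegment ha hb ⟨2⁻¹, by norm_num, rfl⟩ hmid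
  have hsv : v - a = s • v := add_left_cancel hs
  have hs0 : s = 0 := by
    have := congrArg f hsv
    rw [map_sub, map_smul, hfa, sub_self, smul_eq_mul, eq_comm, mul_eq_zero] at this
    exact this.resolve_right hfv
  rw [hs0, zero_smul, sub_eq_zero] at hsv
  exact hsv

theorem nonneg_of_forall_le_add_mul {𝕜 : Type*} [Field 𝕜] [LinearOrder 𝕜] [IsStrictOrderedRing 𝕜]
    {a c d : 𝕜} (h : ∀ t : 𝕜, 0 ≤ t → c ≤ a + t * d) : 0 ≤ d := by
  by_contra! hd
  have hca : 0 ≤ a - c + 1 := by linarith [h 0 le_rfl]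
  have := h ((a - c + 1) / -d) (div_nonneg hca (by linarith))
  rw [div_mul_eq_mul_div, div_neg, mul_div_cancel_right₀ _ hd.ne] at this
  linarith

theorem Pi.sub_single_apply_self_nonneg {ι α : Type*} [DecidableEq ι] [AddGroup α] [Preorder α]
    {f : ι → α} (hf : 0 ≤ f) (k : ι) : 0 ≤ f - Pi.single k (f k) := by
  intro j
  rcases eq_or_ne j k with rfl | hjk
  · simp
  · simpa [hjk] using hf j

theorem Pi.sub_single_apply_self_nonpos {ι α : Type*} [DecidableEq ι] [AddGroup α] [Preorder α]
    {f : ι → α} (hf : f ≤ 0) (k : ι) : f - Pi.single k (f k) ≤ 0 := by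
  intro j
  rcases eq_or_ne j k with rfl | hjk
  · simp
  · simpa [hjk] using hf j

section BCC

variable {ι : Type*} [Fintype ι] {m r : ℕ} {X : ι → Fin m → ℝ} {Y : ι → Fin r → ℝ}
  {q u : (Fin m → ℝ) × (Fin r → ℝ)}

theorem add_mem_BCC (hq : q ∈ BCC X Y) (hu₁ : 0 ≤ u.1) (hu₂ : u.2 ≤ 0) : q + u ∈ BCC X Y := by
  obtain ⟨l, hl₀, hl₁, hlX, hlY⟩ := hq
  exact ⟨l, hl₀, hl₁, fun k => by simpa using add_le_add (hlX k) (hu₁ k),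
    fun i => by simpa using add_le_add (hlY i) (hu₂ i)⟩

theorem neg_sum_abs_le_sum_mul {l : ι → ℝ} (hl₀ : ∀ j, 0 ≤ l j) (hl₁ : ∑ j, l j = 1)
    (x : ι → ℝ) : -∑ j, |x j| ≤ ∑ j, l j * x j :=
  calc -∑ j, |x j| = ∑ j, l j * -∑ j', |x j'| := by rw [← Finset.sum_mul, hl₁, one_mul]
    _ ≤ ∑ j, l j * x j := by
      gcongr with j _
      · exact hl₀ j
      · exact (neg_le_neg (Finset.single_le_sum (fun j' _ => abs_nonneg (x j'))
          (Finset.mem_univ j))).trans (neg_abs_le _)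

theorem neg_sum_abs_le_fst_of_mem_BCC (hq : q ∈ BCC X Y) (k : Fin m) :
    -∑ j, |X j k| ≤ q.1 k := by
  obtain ⟨l, hl₀, hl₁, hlX, -⟩ := hq
  exact (neg_sum_abs_le_sum_mul hl₀ hl₁ (X · k)).trans (hlX k)

theorem snd_le_sum_abs_of_mem_BCC (hq : q ∈ BCC X Y) (i : Fin r) :
    q.2 i ≤ ∑ j, |Y j i| := by
  obtain ⟨l, hl₀, hl₁, -, hlY⟩ := hq
  have := neg_sum_abs_le_sum_mul hl₀ hl₁ (-Y · i)
  simp only [abs_neg, mul_neg, Finset.sum_neg_distrib, neg_le_neg_iff] at this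
  exact (hlY i).trans this

theorem fst_nonneg_and_snd_nonpos_of_forall_add_smul_mem_BCC {p v : (Fin m → ℝ) × (Fin r → ℝ)}
    (hray : ∀ t : ℝ, 0 ≤ t → p + t • v ∈ BCC X Y) : 0 ≤ v.1 ∧ v.2 ≤ 0 := by
  refine ⟨fun k => nonneg_of_forall_le_add_mul (a := p.1 k) (c := -∑ j, |X j k|) fun t ht => ?_,
    fun i => neg_nonneg.mp <|
      nonneg_of_forall_le_add_mul (a := -p.2 i) (c := -∑ j, |Y j i|) fun t ht => ?_⟩
  · simpa using neg_sum_abs_le_fst_of_mem_BCC (hray t ht) k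
  · have := snd_le_sum_abs_of_mem_BCC (hray t ht) i
    simp only [Prod.snd_add, Prod.smul_snd, Pi.add_apply, Pi.smul_apply, smul_eq_mul] at this
    linarith

end BCC

theorem bcc_infinite_edge_direction_general (m r n : ℕ)
    (X : Fin n → Fin m → ℝ) (Y : Fin n → Fin r → ℝ)
    (F : Set ((Fin m → ℝ) × (Fin r → ℝ))) (p v : (Fin m → ℝ) × (Fin r → ℝ))
    (hp : p ∈ BCC X Y) (hv : v ≠ 0)
    (hface : IsExtreme ℝ (BCC X Y) F)
    (hF : F = {q | ∃ t : ℝ, 0 ≤ t ∧ q = p + t • v}) :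
    ∃ c : ℝ, 0 < c ∧
      ((∃ k : Fin m, v = c • ((Pi.single k (1 : ℝ), 0) : (Fin m → ℝ) × (Fin r → ℝ))) ∨
       (∃ i : Fin r, v = c • ((0, -Pi.single i (1 : ℝ)) : (Fin m → ℝ) × (Fin r → ℝ)))) := by
  have hext : IsExtreme ℝ (BCC X Y) {q | ∃ t : ℝ, 0 ≤ t ∧ q = p + t • v} := hF ▸ hface
  obtain ⟨hv₁, hv₂⟩ :=
    fst_nonneg_and_snd_nonpos_of_forall_add_smul_mem_BCC fun t ht => hext.1 ⟨t, ht, rfl⟩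
  by_cases h₁ : v.1 = 0
  · obtain ⟨i, hi⟩ : ∃ i, v.2 i ≠ 0 := by
      by_contra! h₂
      exact hv (Prod.ext h₁ (funext h₂))
    have hva := hext.eq_of_add_mem_of_add_sub_mem (a := (0, Pi.single i (v.2 i)))
      (add_mem_BCC hp le_rfl (Pi.single_nonpos.mpr (hv₂ i)))
      (add_mem_BCC hp (by simpa using hv₁) (Pi.sub_single_apply_self_nonpos hv₂ i))
      ((LinearMap.proj i).comp (LinearMap.snd ℝ _ _)) (by simp) (by simpa using hi)
    refine ⟨-v.2 i, neg_pos.mpr ((hv₂ i).lt_of_ne hi), Or.inr ⟨i, ?_⟩⟩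
    rw [hva]
    ext j <;> simp [Pi.single_apply]
  · obtain ⟨k, hk⟩ : ∃ k, v.1 k ≠ 0 := by
      by_contra! h₂
      exact h₁ (funext h₂)
    have hva := hext.eq_of_add_mem_of_add_sub_mem (a := (Pi.single k (v.1 k), 0))
      (add_mem_BCC hp (Pi.single_nonneg.mpr (hv₁ k)) le_rfl)
      (add_mem_BCC hp (Pi.sub_single_apply_self_nonneg hv₁ k) (by simpa using hv₂))
      ((LinearMap.proj k).comp (LinearMap.fst ℝ _ _)) (by simp) (by simpa using hk)
    refine ⟨v.1 k, (hv₁ k).lt_of_ne hk.symm, Or.inl ⟨k, ?_⟩⟩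
    rw [hva]
    ext j <;> simp [Pi.single_apply]

/-- Only vectors of the forms `d k = (e k, 0)` and `g i = (0, -e i)`, up to positive scalar
multiples, can be direction vectors of infinite edges (extreme rays) of the BCC production
possibility set. -/
theorem bcc_infinite_edge_direction (m r n : ℕ) (hn : 1 ≤ n)
    (X : Fin n → Fin m → ℝ) (Y : Fin n → Fin r → ℝ)
    (hX : ∀ j k, 0 ≤ X j k) (hY : ∀ j i, 0 ≤ Y j i)
    (F : Set ((Fin m → ℝ) × (Fin r → ℝ))) (p v : (Fin m → ℝ) × (Fin r → ℝ))
    (hp : p ∈ BCC X Y) (hv : v ≠ 0)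
    (hface : IsExtreme ℝ (BCC X Y) F)
    (hF : F = {q | ∃ t : ℝ, 0 ≤ t ∧ q = p + t • v}) :
    ∃ c : ℝ, 0 < c ∧
      ((∃ k : Fin m, v = c • ((Pi.single k (1 : ℝ), 0) : (Fin m → ℝ) × (Fin r → ℝ))) ∨
       (∃ i : Fin r, v = c • ((0, -Pi.single i (1 : ℝ)) : (Fin m → ℝ) × (Fin r → ℝ)))) :=
  bcc_infinite_edge_direction_general m r n X Y F p v hp hv hface hF
end

section
/- Every input weakly efficient and every output weakly efficient unit of the BCC production possibility set T is weakly Pareto efficient: WEff_i T ∪ WEff_o T ⊆ WEff_p T. -/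
open Finset

/-- Input weakly efficient points of `T`. -/
def WEffI {m r : ℕ} (T : Set ((Fin m → ℝ) × (Fin r → ℝ))) : Set ((Fin m → ℝ) × (Fin r → ℝ)) :=
  {p | p ∈ T ∧ ∀ θ : ℝ, 0 ≤ θ → θ < 1 → (θ • p.1, p.2) ∉ T}

/-- Output weakly efficient points of `T`. -/
def WEffO {m r : ℕ} (T : Set ((Fin m → ℝ) × (Fin r → ℝ))) : Set ((Fin m → ℝ) × (Fin r → ℝ)) :=
  {p | p ∈ T ∧ ∀ η : ℝ, 1 < η → (p.1, η • p.2) ∉ T}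

/-- Weakly Pareto efficient points of `T`. -/
def WEffP {m r : ℕ} (T : Set ((Fin m → ℝ) × (Fin r → ℝ))) : Set ((Fin m → ℝ) × (Fin r → ℝ)) :=
  {p | p ∈ T ∧ ¬∃ q ∈ T, (∀ k, q.1 k < p.1 k) ∧ (∀ i, p.2 i < q.2 i)}

/-- Every input weakly efficient and every output weakly efficient unit of the BCC production
possibility set is weakly Pareto efficient: `WEff_i T ∪ WEff_o T ⊆ WEff_p T`. -/
theorem weffI_union_weffO_subset_weffP (m r n : ℕ) (hn : 1 ≤ n)
    (X : Fin n → Fin m → ℝ) (Y : Fin n → Fin r → ℝ)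
    (hX : ∀ j k, 0 ≤ X j k) (hY : ∀ j i, 0 ≤ Y j i) :
    WEffI (BCC X Y) ∪ WEffO (BCC X Y) ⊆ WEffP (BCC X Y) := by
  rintro p (⟨hpT, hI⟩ | ⟨hpT, hO⟩)
  · refine ⟨hpT, ?_⟩
    rintro ⟨q, ⟨l, hl0, hl1, hlX, hlY⟩, hq1, hq2⟩
    have hsum0 : ∀ k, (0:ℝ) ≤ ∑ j, l j * X j k := fun k =>
      Finset.sum_nonneg fun j _ => mul_nonneg (hl0 j) (hX j k)
    have hpos : ∀ k, 0 < p.1 k := fun k =>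
      lt_of_le_of_lt (le_trans (hsum0 k) (hlX k)) (hq1 k)
    rcases isEmpty_or_nonempty (Fin m) with hm | hm
    · exact hI 0 le_rfl zero_lt_one
        ⟨l, hl0, hl1, fun k => (IsEmpty.false k).elim,
         fun i => le_of_lt (lt_of_lt_of_le (hq2 i) (hlY i))⟩
    · set g : Fin m → ℝ := fun k => (∑ j, l j * X j k) / p.1 k with hg
      set θ : ℝ := Finset.univ.sup' Finset.univ_nonempty g with hθ
      have hθ0 : 0 ≤ θ := by
        obtain ⟨k⟩ := hm
        exact le_trans (div_nonneg (hsum0 k) (hpos k).le)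
          (Finset.le_sup' g (Finset.mem_univ k))
      have hθ1 : θ < 1 := by
        rw [hθ, Finset.sup'_lt_iff]
        intro k _
        exact (div_lt_one (hpos k)).mpr (lt_of_le_of_lt (hlX k) (hq1 k))
      refine hI θ hθ0 hθ1 ⟨l, hl0, hl1, fun k => ?_,
        fun i => le_of_lt (lt_of_lt_of_le (hq2 i) (hlY i))⟩
      have : g k ≤ θ := Finset.le_sup' g (Finset.mem_univ k)
      have := (div_le_iff₀ (hpos k)).mp this
      simpa [Pi.smul_apply, smul_eq_mul, mul_comm] using this
  · refine ⟨hpT, ?_⟩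
    rintro ⟨q, ⟨l, hl0, hl1, hlX, hlY⟩, hq1, hq2⟩
    rcases isEmpty_or_nonempty (Fin r) with hr | hr
    · exact hO 2 one_lt_two
        ⟨l, hl0, hl1, fun k => le_of_lt (lt_of_le_of_lt (hlX k) (hq1 k)),
         fun i => (IsEmpty.false i).elim⟩
    · set f : Fin r → ℝ := fun i => if 0 < p.2 i then (∑ j, l j * Y j i) / p.2 i else 2 with hf
      set η : ℝ := Finset.univ.inf' Finset.univ_nonempty f with hη
      have hsumY : ∀ i, p.2 i < ∑ j, l j * Y j i := fun i =>
        lt_of_lt_of_le (hq2 i) (hlY i)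
      have hη1 : 1 < η := by
        rw [hη, Finset.lt_inf'_iff]
        intro i _
        rw [hf]
        dsimp only
        split_ifs with h
        · exact (one_lt_div h).mpr (hsumY i)
        · norm_num
      refine hO η hη1 ⟨l, hl0, hl1,
        fun k => le_of_lt (lt_of_le_of_lt (hlX k) (hq1 k)), fun i => ?_⟩
      have hηf : η ≤ f i := Finset.inf'_le f (Finset.mem_univ i)
      show η * p.2 i ≤ _
      by_cases h : 0 < p.2 i
      · have : η ≤ (∑ j, l j * Y j i) / p.2 i := by
          rw [hf] at hηf; simpa [h] using hηf
        calc η * p.2 i ≤ ((∑ j, l j * Y j i) / p.2 i) * p.2 i :=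
              mul_le_mul_of_nonneg_right this h.le
          _ = ∑ j, l j * Y j i := div_mul_cancel₀ _ h.ne'
      · push_neg at h
        have : η * p.2 i ≤ 1 * p.2 i :=
          mul_le_mul_of_nonpos_right hη1.le h
        calc η * p.2 i ≤ 1 * p.2 i := this
          _ = p.2 i := one_mul _
          _ ≤ ∑ j, l j * Y j i := (hsumY i).le
end

section
/- The set of weakly Pareto efficient points of the BCC production possibility set T coincides with the topological boundary of T in ℝ^m × ℝ^r: WEff_p T = Bound T. -/
open Finset

/-!
A closed set `T` of input/output pairs with free disposal (more input and less output stay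
feasible) is a neighbourhood of every point it strictly dominates, and conversely every interior
point can be shifted to less input and more output inside `T`. Hence the weakly efficient points
are exactly `T \ interior T = frontier T`. The BCC set has free disposal and is closed, being the
sum of the compact image of the standard simplex and the closed cone `Ici 0 ×ˢ Iic 0`.
-/

open Filter Topology Pointwise

section FreeDisposal

variable {ι κ : Type*}

def FreeDisposal (T : Set ((ι → ℝ) × (κ → ℝ))) : Prop :=
  ∀ p ∈ T, ∀ q : (ι → ℝ) × (κ → ℝ), p.1 ≤ q.1 → q.2 ≤ p.2 → q ∈ T

lemma exists_strictly_dominating_of_mem_interior {T : Set ((ι → ℝ) × (κ → ℝ))}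
    {p : (ι → ℝ) × (κ → ℝ)} (hp : p ∈ interior T) :
    ∃ q ∈ T, (∀ k, q.1 k < p.1 k) ∧ (∀ i, p.2 i < q.2 i) := by
  let shift : ℝ → (ι → ℝ) × (κ → ℝ) := fun ε => (p.1 - ε • 1, p.2 + ε • 1)
  have hshift : Tendsto shift (𝓝 0) (𝓝 p) := by
    have : Continuous shift := by fun_prop
    simpa [shift] using this.tendsto 0
  have hev : ∀ᶠ ε in 𝓝[>] 0, shift ε ∈ T :=
    nhdsWithin_le_nhds (hshift.eventually (mem_interior_iff_mem_nhds.1 hp))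
  obtain ⟨ε, hεT, hε⟩ := (hev.and self_mem_nhdsWithin).exists
  exact ⟨shift ε, hεT, fun k => by simp [shift, hε], fun i => by simp [shift, hε]⟩

variable [Finite ι] [Finite κ] {T : Set ((ι → ℝ) × (κ → ℝ))}

lemma FreeDisposal.mem_interior_of_strictly_dominated (hT : FreeDisposal T)
    {p q : (ι → ℝ) × (κ → ℝ)} (hq : q ∈ T) (hin : ∀ k, q.1 k < p.1 k)
    (hout : ∀ i, p.2 i < q.2 i) : p ∈ interior T := by
  refine mem_interior.2 ⟨Set.univ.pi (fun k => Set.Ioi (q.1 k)) ×ˢ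
    Set.univ.pi (fun i => Set.Iio (q.2 i)), ?_, ?_, ?_⟩
  · rintro a ⟨ha₁, ha₂⟩
    exact hT q hq a (fun k => (ha₁ k trivial).le) (fun i => (ha₂ i trivial).le)
  · exact (isOpen_set_pi Set.finite_univ fun k _ => isOpen_Ioi).prod
      (isOpen_set_pi Set.finite_univ fun i _ => isOpen_Iio)
  · exact ⟨fun k _ => hin k, fun i _ => hout i⟩

lemma FreeDisposal.mem_interior_iff (hT : FreeDisposal T) {p : (ι → ℝ) × (κ → ℝ)} :
    p ∈ interior T ↔ ∃ q ∈ T, (∀ k, q.1 k < p.1 k) ∧ (∀ i, p.2 i < q.2 i) :=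
  ⟨exists_strictly_dominating_of_mem_interior,
    fun ⟨_, hq, hin, hout⟩ => hT.mem_interior_of_strictly_dominated hq hin hout⟩

end FreeDisposal

lemma FreeDisposal.weffP_eq_diff_interior {m r : ℕ} {T : Set ((Fin m → ℝ) × (Fin r → ℝ))}
    (hT : FreeDisposal T) : WEffP T = T \ interior T := by
  ext p
  simp only [WEffP, Set.mem_ofPred_eq, Set.mem_sdiff, hT.mem_interior_iff]

section BCC

variable {ι : Type*} [Fintype ι] {m r : ℕ} (X : ι → Fin m → ℝ) (Y : ι → Fin r → ℝ)

lemma freeDisposal_BCC : FreeDisposal (BCC X Y) := by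
  rintro p ⟨l, hl₀, hl₁, hlX, hlY⟩ q hin hout
  exact ⟨l, hl₀, hl₁, fun k => (hlX k).trans (hin k), fun i => (hout i).trans (hlY i)⟩

lemma BCC_eq_image_stdSimplex_add :
    BCC X Y = (fun l : ι → ℝ => ∑ j, l j • (X j, Y j)) '' stdSimplex ℝ ι +
      Set.Ici 0 ×ˢ Set.Iic 0 := by
  ext p
  simp only [Set.mem_add, Set.mem_image, Set.mem_prod, Set.mem_Ici, Set.mem_Iic]
  constructor
  · rintro ⟨l, hl₀, hl₁, hlX, hlY⟩
    refine ⟨_, ⟨l, ⟨hl₀, hl₁⟩, rfl⟩, p - ∑ j, l j • (X j, Y j), ⟨fun k => ?_, fun i => ?_⟩,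
      add_sub_cancel _ _⟩
    · simpa [Prod.fst_sum, Finset.sum_apply] using hlX k
    · simpa [Prod.snd_sum, Finset.sum_apply] using hlY i
  · rintro ⟨_, ⟨l, ⟨hl₀, hl₁⟩, rfl⟩, c, ⟨hc₁, hc₂⟩, rfl⟩
    refine ⟨l, hl₀, hl₁, fun k => ?_, fun i => ?_⟩
    · simpa [Prod.fst_sum, Finset.sum_apply] using hc₁ k
    · simpa [Prod.snd_sum, Finset.sum_apply] using hc₂ i

lemma isClosed_BCC : IsClosed (BCC X Y) := by
  rw [BCC_eq_image_stdSimplex_add]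
  refine (isClosed_Ici.prod isClosed_Iic).add_left_of_isCompact ?_
  exact (isCompact_stdSimplex ℝ ι).image (by fun_prop)

end BCC

theorem weffP_eq_frontier_general (m r n : ℕ)
    (X : Fin n → Fin m → ℝ) (Y : Fin n → Fin r → ℝ) :
    WEffP (BCC X Y) = frontier (BCC X Y) := by
  rw [(freeDisposal_BCC X Y).weffP_eq_diff_interior, (isClosed_BCC X Y).frontier_eq]

/-- The set of weakly Pareto efficient points of the BCC production possibility set coincides
with its topological boundary: `WEff_p T = Bound T`. -/
theorem weffP_eq_frontier (m r n : ℕ) (hn : 1 ≤ n)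
    (X : Fin n → Fin m → ℝ) (Y : Fin n → Fin r → ℝ)
    (hX : ∀ j k, 0 ≤ X j k) (hY : ∀ j i, 0 ≤ Y j i) :
    WEffP (BCC X Y) = frontier (BCC X Y) :=
  weffP_eq_frontier_general m r n X Y
end

section
/- Let T be the BCC production possibility set generated by units (X_1,Y_1),…,(X_n,Y_n) and let A ∈ ℝ^m × ℝ^r with A ∉ T and with nonnegative input components and nonnegative output components. Let T̃ be the BCC production possibility set generated by the units (X_1,Y_1),…,(X_n,Y_n) together with A. Then T ⊆ T̃ and A is an extreme point of T̃. -/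
open Finset

lemma bcc_aux_ge {a b x y z : ℝ} (ha : 0 < a) (hb : 0 < b) (hab : a + b = 1)
    (h : a * x + b * y = z) (hx : z ≤ x) (hy : z ≤ y) : x = z ∧ y = z := by
  have h1 : 0 ≤ a * (x - z) := mul_nonneg ha.le (by linarith)
  have h2 : 0 ≤ b * (y - z) := mul_nonneg hb.le (by linarith)
  have h0 : a * (x - z) + b * (y - z) = 0 := by linear_combination h - z * hab
  have e1 : a * (x - z) = 0 := by linarith
  have e2 : b * (y - z) = 0 := by linarith
  constructor
  · have := (mul_eq_zero.1 e1).resolve_left ha.ne'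
    linarith [this]
  · have := (mul_eq_zero.1 e2).resolve_left hb.ne'
    linarith [this]

lemma bcc_aux_le {a b x y z : ℝ} (ha : 0 < a) (hb : 0 < b) (hab : a + b = 1)
    (h : a * x + b * y = z) (hx : x ≤ z) (hy : y ≤ z) : x = z ∧ y = z := by
  have h1 : 0 ≤ a * (z - x) := mul_nonneg ha.le (by linarith)
  have h2 : 0 ≤ b * (z - y) := mul_nonneg hb.le (by linarith)
  have h0 : a * (z - x) + b * (z - y) = 0 := by linear_combination z * hab - h
  have e1 : a * (z - x) = 0 := by linarith
  have e2 : b * (z - y) = 0 := by linarith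
  constructor
  · have := (mul_eq_zero.1 e1).resolve_left ha.ne'
    linarith [this]
  · have := (mul_eq_zero.1 e2).resolve_left hb.ne'
    linarith [this]

/-- If `A ∉ T` has nonnegative inputs and outputs and `T̃` is the BCC production possibility set
generated by the original units together with `A`, then `T ⊆ T̃` and `A` is an extreme point
of `T̃`. -/
theorem bcc_insert_artificial_unit (m r n : ℕ) (hn : 1 ≤ n)
    (X : Fin n → Fin m → ℝ) (Y : Fin n → Fin r → ℝ)
    (hX : ∀ j k, 0 ≤ X j k) (hY : ∀ j i, 0 ≤ Y j i)
    (A : (Fin m → ℝ) × (Fin r → ℝ))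
    (hA1 : ∀ k, 0 ≤ A.1 k) (hA2 : ∀ i, 0 ≤ A.2 i)
    (hA : A ∉ BCC X Y) :
    BCC X Y ⊆ BCC (Fin.snoc X A.1) (Fin.snoc Y A.2) ∧
      A ∈ Set.extremePoints ℝ (BCC (Fin.snoc X A.1) (Fin.snoc Y A.2)) := by
  constructor
  · -- T ⊆ T̃
    intro p hp
    obtain ⟨l, hl0, hl1, hlX, hlY⟩ := hp
    refine ⟨Fin.snoc l 0, ?_, ?_, ?_, ?_⟩
    · intro j
      cases j using Fin.lastCases with
      | last => simp
      | cast j => simpa using hl0 j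
    · rw [Fin.sum_univ_castSucc]; simpa using hl1
    · intro k
      rw [Fin.sum_univ_castSucc]; simpa using hlX k
    · intro i
      rw [Fin.sum_univ_castSucc]; simpa using hlY i
  rw [mem_extremePoints]
  constructor
  · -- A ∈ T̃
    refine ⟨fun j => if j = Fin.last n then 1 else 0, ?_, ?_, ?_, ?_⟩
    · intro j; dsimp only; split <;> norm_num
    · simp
    · intro k; simp [ite_mul]
    · intro i; simp [ite_mul]
  -- extremeness
  rintro x₁ ⟨l, hl0, hl1, hlX, hlY⟩ x₂ ⟨q, hq0, hq1, hqX, hqY⟩ ⟨a, b, ha, hb, hab, hsum⟩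
  have hA1' : ∀ k, a * x₁.1 k + b * x₂.1 k = A.1 k := by
    intro k; have := congrArg (fun p => p.1 k) hsum; simpa using this
  have hA2' : ∀ i, a * x₁.2 i + b * x₂.2 i = A.2 i := by
    intro i; have := congrArg (fun p => p.2 i) hsum; simpa using this
  -- split sums over Fin (n+1)
  have hl1' : ∑ j : Fin n, l j.castSucc + l (Fin.last n) = 1 := by
    rw [← Fin.sum_univ_castSucc]; exact hl1
  have hq1' : ∑ j : Fin n, q j.castSucc + q (Fin.last n) = 1 := by
    rw [← Fin.sum_univ_castSucc]; exact hq1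
  have hlX' : ∀ k, ∑ j : Fin n, l j.castSucc * X j k + l (Fin.last n) * A.1 k ≤ x₁.1 k := by
    intro k; have := hlX k; rw [Fin.sum_univ_castSucc] at this; simpa using this
  have hqX' : ∀ k, ∑ j : Fin n, q j.castSucc * X j k + q (Fin.last n) * A.1 k ≤ x₂.1 k := by
    intro k; have := hqX k; rw [Fin.sum_univ_castSucc] at this; simpa using this
  have hlY' : ∀ i, x₁.2 i ≤ ∑ j : Fin n, l j.castSucc * Y j i + l (Fin.last n) * A.2 i := by
    intro i; have := hlY i; rw [Fin.sum_univ_castSucc] at this; simpa using this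
  have hqY' : ∀ i, x₂.2 i ≤ ∑ j : Fin n, q j.castSucc * Y j i + q (Fin.last n) * A.2 i := by
    intro i; have := hqY i; rw [Fin.sum_univ_castSucc] at this; simpa using this
  have hLle : l (Fin.last n) ≤ 1 := hl1 ▸ Finset.single_le_sum (fun j _ => hl0 j) (mem_univ _)
  have hQle : q (Fin.last n) ≤ 1 := hq1 ▸ Finset.single_le_sum (fun j _ => hq0 j) (mem_univ _)
  set s : ℝ := a * l (Fin.last n) + b * q (Fin.last n) with hs_def
  have hs1 : s = 1 := by
    by_contra hne
    have hslt : s < 1 := by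
      rcases lt_or_eq_of_le (show s ≤ 1 by nlinarith) with h | h
      · exact h
      · exact absurd h hne
    have hc : (0:ℝ) < 1 - s := by linarith
    apply hA
    refine ⟨fun j => (a * l j.castSucc + b * q j.castSucc) / (1 - s), ?_, ?_, ?_, ?_⟩
    · intro j
      apply div_nonneg _ hc.le
      have := hl0 j.castSucc; have := hq0 j.castSucc; nlinarith
    · rw [← Finset.sum_div]
      rw [Finset.sum_add_distrib, ← Finset.mul_sum, ← Finset.mul_sum]
      rw [div_eq_one_iff_eq hc.ne']
      nlinarith
    · intro k
      simp_rw [div_mul_eq_mul_div]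
      rw [← Finset.sum_div, div_le_iff₀ hc]
      simp_rw [add_mul, mul_assoc]
      rw [Finset.sum_add_distrib, ← Finset.mul_sum, ← Finset.mul_sum, hs_def]
      nlinarith [mul_le_mul_of_nonneg_left (hlX' k) ha.le,
        mul_le_mul_of_nonneg_left (hqX' k) hb.le, hA1' k]
    · intro i
      simp_rw [div_mul_eq_mul_div]
      rw [← Finset.sum_div, le_div_iff₀ hc]
      simp_rw [add_mul, mul_assoc]
      rw [Finset.sum_add_distrib, ← Finset.mul_sum, ← Finset.mul_sum, hs_def]
      nlinarith [mul_le_mul_of_nonneg_left (hlY' i) ha.le,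
        mul_le_mul_of_nonneg_left (hqY' i) hb.le, hA2' i]
  have hL : l (Fin.last n) = 1 := by nlinarith
  have hQ : q (Fin.last n) = 1 := by nlinarith
  have hlz : ∀ j : Fin n, l j.castSucc = 0 := by
    have hz : ∑ j : Fin n, l j.castSucc = 0 := by linarith
    intro j
    exact (Finset.sum_eq_zero_iff_of_nonneg (fun j _ => hl0 j.castSucc)).1 hz j (mem_univ j)
  have hqz : ∀ j : Fin n, q j.castSucc = 0 := by
    have hz : ∑ j : Fin n, q j.castSucc = 0 := by linarith
    intro j
    exact (Finset.sum_eq_zero_iff_of_nonneg (fun j _ => hq0 j.castSucc)).1 hz j (mem_univ j)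
  have hx1X : ∀ k, A.1 k ≤ x₁.1 k := by
    intro k
    have hz : ∑ j : Fin n, l j.castSucc * X j k = 0 :=
      Finset.sum_eq_zero fun j _ => by rw [hlz j, zero_mul]
    have := hlX' k; rw [hz, hL] at this; linarith
  have hx2X : ∀ k, A.1 k ≤ x₂.1 k := by
    intro k
    have hz : ∑ j : Fin n, q j.castSucc * X j k = 0 :=
      Finset.sum_eq_zero fun j _ => by rw [hqz j, zero_mul]
    have := hqX' k; rw [hz, hQ] at this; linarith
  have hx1Y : ∀ i, x₁.2 i ≤ A.2 i := by
    intro i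
    have hz : ∑ j : Fin n, l j.castSucc * Y j i = 0 :=
      Finset.sum_eq_zero fun j _ => by rw [hlz j, zero_mul]
    have := hlY' i; rw [hz, hL] at this; linarith
  have hx2Y : ∀ i, x₂.2 i ≤ A.2 i := by
    intro i
    have hz : ∑ j : Fin n, q j.castSucc * Y j i = 0 :=
      Finset.sum_eq_zero fun j _ => by rw [hqz j, zero_mul]
    have := hqY' i; rw [hz, hQ] at this; linarith
  constructor
  · refine Prod.ext (funext fun k => ?_) (funext fun i => ?_)
    · exact (bcc_aux_ge ha hb hab (hA1' k) (hx1X k) (hx2X k)).1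
    · exact (bcc_aux_le ha hb hab (hA2' i) (hx1Y i) (hx2Y i)).1
  · refine Prod.ext (funext fun k => ?_) (funext fun i => ?_)
    · exact (bcc_aux_ge ha hb hab (hA1' k) (hx1X k) (hx2X k)).2
    · exact (bcc_aux_le ha hb hab (hA2' i) (hx1Y i) (hx2Y i)).2
end

section
/- Every extreme point of the BCC production possibility set T is exposed: if Z is an extreme point of T, then there exists a linear functional f on ℝ^m × ℝ^r such that f(x) < f(Z) for every x ∈ T with x ≠ Z; equivalently, there is a supporting hyperplane through Z having no other common points with T. -/
/-!
The BCC set is the Minkowski sum of the convex hull of the units and the finitely generated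
free-disposal cone. In such a set `T`, an extreme point `z` lies outside the convex hull of the
finitely many points of `T \ {z}` given by the units and by `z` moved along each generator of the
cone. A functional strictly separating `z` from that polytope is below its value at `z` on every
unit other than `z` and negative on every nonzero generator, hence on every point of `T` other
than `z`.
-/

open Finset

open Set
open scoped Pointwise

section Exposed

variable {E : Type*} [AddCommGroup E] [Module ℝ E]

theorem convex_insert_halfSpace_lt (f : E →ₗ[ℝ] ℝ) (z : E) :
    Convex ℝ (insert z {y | f y < f z}) := by
  rintro x hx y hy a b ha hb hab
  have hf : f (a • x + b • y) = a * f x + b * f y := by simp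
  rcases hx with rfl | (hx : f x < f z) <;> rcases hy with rfl | (hy : f y < f _)
  · exact Or.inl (Convex.combo_self hab _)
  · rcases hb.eq_or_lt with rfl | hb
    · exact Or.inl (by simp [show a = 1 by linarith])
    · exact Or.inr (show f (a • x + b • y) < f x by
        rw [hf, show a = 1 - b by linarith]; linarith [mul_lt_mul_of_pos_left hy hb])
  · rcases ha.eq_or_lt with rfl | ha
    · exact Or.inl (by simp [show b = 1 by linarith])
    · exact Or.inr (show f (a • x + b • y) < f y by
        rw [hf, show b = 1 - a by linarith]; linarith [mul_lt_mul_of_pos_left hx ha])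
  · exact Or.inr (convex_halfSpace_lt f.isLinear (f z) hx hy ha hb hab)

theorem PointedCone.hull_subset_insert_zero_halfSpace_neg {f : E →ₗ[ℝ] ℝ} {t : Set E}
    (ht : t ⊆ insert 0 {c | f c < 0}) :
    (PointedCone.hull ℝ t : Set E) ⊆ insert 0 {c | f c < 0} := by
  intro c hc
  induction hc using Submodule.span_induction with
  | mem c hc => exact ht hc
  | zero => exact Or.inl rfl
  | add c d _ _ hc hd =>
    rcases hc with rfl | (hc : f c < 0)
    · simpa using hd
    rcases hd with rfl | (hd : f d < 0)
    · simpa using Or.inr hc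
    exact Or.inr (show f (c + d) < 0 by rw [map_add]; exact add_neg hc hd)
  | smul a c _ hc =>
    obtain ⟨a, ha⟩ := a
    rw [Nonneg.mk_smul]
    rcases hc with rfl | (hc : f c < 0)
    · simp
    rcases ha.eq_or_lt with rfl | ha
    · simp
    exact Or.inr (show f (a • c) < 0 by
      rw [map_smul, smul_eq_mul]; exact mul_neg_of_pos_of_neg ha hc)

variable [TopologicalSpace E] [IsTopologicalAddGroup E] [ContinuousSMul ℝ E]
  [LocallyConvexSpace ℝ E] [T2Space E]

theorem exists_separating_of_mem_extremePoints_convexHull_add_hull {s t : Set E}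
    (hs : s.Finite) (ht : t.Finite) {z : E}
    (hz : z ∈ (convexHull ℝ s + (PointedCone.hull ℝ t : Set E)).extremePoints ℝ) :
    ∃ f : StrongDual ℝ E, s ⊆ insert z {y | (f : E →ₗ[ℝ] ℝ) y < f z} ∧
      t ⊆ insert 0 {c | (f : E →ₗ[ℝ] ℝ) c < 0} := by
  set T := convexHull ℝ s + (PointedCone.hull ℝ t : Set E)
  have hsT : s ⊆ T := fun p hp => by
    simpa using add_mem_add (subset_convexHull ℝ s hp) (PointedCone.hull ℝ t).zero_mem
  have htT : ∀ d ∈ t, z + d ∈ T := by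
    obtain ⟨y, hy, c, hc, hyc⟩ := hz.1
    exact fun d hd => ⟨y, hy, c + d, add_mem hc (PointedCone.subset_hull hd), by
      rw [← hyc, add_assoc]⟩
  set Q := (s ∪ (z + ·) '' t) \ {z}
  have hzQ : z ∉ convexHull ℝ Q := by
    have hQT : Q ⊆ T \ {z} := sdiff_subset_sdiff_left (union_subset hsT (image_subset_iff.2 htT))
    have hzT := (convex_convexHull ℝ s).add (PointedCone.hull ℝ t).convex
      |>.mem_extremePoints_iff_mem_sdiff_convexHull_sdiff.1 hz
    exact fun h => hzT.2 (convexHull_mono hQT h)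
  obtain ⟨f, u, hfQ, hfz⟩ := geometric_hahn_banach_closed_point (convex_convexHull ℝ Q)
    ((hs.union (ht.image _)).sdiff.isClosed_convexHull ℝ) hzQ
  have hlt : ∀ q ∈ Q, f q < f z := fun q hq => (hfQ q (subset_convexHull ℝ Q hq)).trans hfz
  refine ⟨f, fun p hp => or_iff_not_imp_left.2 fun hpz => hlt p ⟨Or.inl hp, hpz⟩,
    fun d hd => or_iff_not_imp_left.2 fun hd0 => ?_⟩
  have hzd := hlt (z + d) ⟨Or.inr ⟨d, hd, rfl⟩, by simpa using hd0⟩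
  simp only [mem_ofPred_eq, ContinuousLinearMap.coe_coe, map_add] at hzd ⊢
  linarith

theorem extremePoints_convexHull_add_hull_subset_exposedPoints {s t : Set E}
    (hs : s.Finite) (ht : t.Finite) :
    (convexHull ℝ s + (PointedCone.hull ℝ t : Set E)).extremePoints ℝ ⊆
      (convexHull ℝ s + (PointedCone.hull ℝ t : Set E)).exposedPoints ℝ := by
  intro z hz
  obtain ⟨f, hs', ht'⟩ := exists_separating_of_mem_extremePoints_convexHull_add_hull hs ht hz
  refine ⟨hz.1, f, ?_⟩
  rintro _ ⟨y, hy, c, hc, rfl⟩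
  have hyc : y + c = z ∨ f (y + c) < f z := by
    rw [map_add]
    rcases convexHull_min hs' (convex_insert_halfSpace_lt _ z) hy with rfl | (hy : f y < f z) <;>
      rcases PointedCone.hull_subset_insert_zero_halfSpace_neg ht' hc with rfl | (hc : f c < 0)
    · simp
    · exact Or.inr (by linarith)
    · exact Or.inr (by simpa using hy)
    · exact Or.inr (by linarith)
  rcases hyc with hyc | hyc
  · simp [hyc]
  · exact ⟨hyc.le, fun h => absurd h hyc.not_ge⟩

end Exposed

section Disposal

variable (κ ρ : Type*) [DecidableEq κ] [DecidableEq ρ]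

def disposalDirections : Set ((κ → ℝ) × (ρ → ℝ)) :=
  range (fun k => (Pi.single k 1, 0)) ∪ range (fun i => (0, -Pi.single i 1))

variable [Fintype κ] [Fintype ρ]

theorem disposalDirections_finite : (disposalDirections κ ρ).Finite :=
  (finite_range _).union (finite_range _)

theorem coe_hull_disposalDirections :
    (PointedCone.hull ℝ (disposalDirections κ ρ) : Set ((κ → ℝ) × (ρ → ℝ))) =
      {c | 0 ≤ c.1 ∧ c.2 ≤ 0} := by
  apply Set.Subset.antisymm
  · intro c hc
    induction hc using Submodule.span_induction with
    | mem c hc => rcases hc with ⟨k, rfl⟩ | ⟨i, rfl⟩ <;> simp [Pi.single_nonneg]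
    | zero => simp
    | add c d _ _ hc hd => exact ⟨add_nonneg hc.1 hd.1, add_nonpos hc.2 hd.2⟩
    | smul a c _ hc =>
      obtain ⟨a, ha⟩ := a
      rw [Nonneg.mk_smul]
      exact ⟨smul_nonneg ha hc.1, smul_nonpos_of_nonneg_of_nonpos ha hc.2⟩
  · rintro c ⟨h1, h2⟩
    have hc : c = ∑ k, c.1 k • ((Pi.single k 1 : κ → ℝ), (0 : ρ → ℝ)) +
        ∑ i, (-c.2 i) • ((0 : κ → ℝ), -(Pi.single i 1 : ρ → ℝ)) := by
      ext <;> simp [Prod.fst_sum, Prod.snd_sum, Finset.sum_apply, Pi.single_apply]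
    rw [hc]
    refine add_mem (Submodule.sum_mem _ fun k _ => ?_) (Submodule.sum_mem _ fun i _ => ?_)
    · exact PointedCone.smul_mem _ (h1 k) (PointedCone.subset_hull (Or.inl ⟨k, rfl⟩))
    · exact PointedCone.smul_mem _ (neg_nonneg.2 (h2 i))
        (PointedCone.subset_hull (Or.inr ⟨i, rfl⟩))

end Disposal

theorem convexHull_range_eq_image_stdSimplex {R ι E : Type*} [Field R] [LinearOrder R]
    [IsStrictOrderedRing R] [Fintype ι] [AddCommGroup E] [Module R E] (v : ι → E) :
    convexHull R (range v) = (fun w => ∑ i, w i • v i) '' stdSimplex R ι := by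
  classical
  change _ = Fintype.linearCombination R v '' _
  rw [← convexHull_rangle_single_eq_stdSimplex, LinearMap.image_convexHull, ← range_comp]
  congr
  ext i
  simp [Fintype.linearCombination_apply_single]

theorem bcc_eq_convexHull_add {ι : Type*} [Fintype ι] {m r : ℕ} (X : ι → Fin m → ℝ)
    (Y : ι → Fin r → ℝ) :
    BCC X Y = convexHull ℝ (range fun j => (X j, Y j)) + {c | 0 ≤ c.1 ∧ c.2 ≤ 0} := by
  have hfst : ∀ l : ι → ℝ, ∀ k, (∑ j, l j • (X j, Y j)).1 k = ∑ j, l j * X j k := by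
    simp [Prod.fst_sum, Finset.sum_apply]
  have hsnd : ∀ l : ι → ℝ, ∀ i, (∑ j, l j • (X j, Y j)).2 i = ∑ j, l j * Y j i := by
    simp [Prod.snd_sum, Finset.sum_apply]
  ext x
  rw [convexHull_range_eq_image_stdSimplex]
  constructor
  · rintro ⟨l, hl0, hl1, hX, hY⟩
    refine ⟨_, ⟨l, ⟨hl0, hl1⟩, rfl⟩, x - ∑ j, l j • (X j, Y j), ⟨fun k => ?_, fun i => ?_⟩,
      add_sub_cancel _ _⟩
    · rw [Prod.fst_sub, Pi.sub_apply, hfst]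
      exact sub_nonneg.2 (hX k)
    · rw [Prod.snd_sub, Pi.sub_apply, hsnd]
      exact sub_nonpos.2 (hY i)
  · rintro ⟨_, ⟨l, ⟨hl0, hl1⟩, rfl⟩, c, ⟨hc1, hc2⟩, rfl⟩
    refine ⟨l, hl0, hl1, fun k => ?_, fun i => ?_⟩
    · rw [Prod.fst_add, Pi.add_apply, hfst]
      exact le_add_of_nonneg_right (hc1 k)
    · rw [Prod.snd_add, Pi.add_apply, hsnd]
      exact add_le_of_nonpos_right (hc2 i)

theorem bcc_extreme_point_is_exposed_general (m r n : ℕ)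
    (X : Fin n → Fin m → ℝ) (Y : Fin n → Fin r → ℝ)
    (Z : (Fin m → ℝ) × (Fin r → ℝ)) (hZ : Z ∈ Set.extremePoints ℝ (BCC X Y)) :
    ∃ f : ((Fin m → ℝ) × (Fin r → ℝ)) →ₗ[ℝ] ℝ,
      ∀ x ∈ BCC X Y, x ≠ Z → f x < f Z := by
  rw [bcc_eq_convexHull_add, ← coe_hull_disposalDirections] at hZ ⊢
  obtain ⟨-, f, hf⟩ := extremePoints_convexHull_add_hull_subset_exposedPoints
    (finite_range _) (disposalDirections_finite _ _) hZ
  exact ⟨f, fun x hx hxZ => lt_of_not_ge fun h => hxZ ((hf x hx).2 h)⟩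

/-- Every extreme point of the BCC production possibility set is exposed: there is a linear
functional `f` with `f x < f Z` for every `x ∈ T` with `x ≠ Z`, i.e. a supporting hyperplane
through `Z` having no other common points with `T`. -/
theorem bcc_extreme_point_is_exposed (m r n : ℕ) (hn : 1 ≤ n)
    (X : Fin n → Fin m → ℝ) (Y : Fin n → Fin r → ℝ)
    (hX : ∀ j k, 0 ≤ X j k) (hY : ∀ j i, 0 ≤ Y j i)
    (Z : (Fin m → ℝ) × (Fin r → ℝ)) (hZ : Z ∈ Set.extremePoints ℝ (BCC X Y)) :
    ∃ f : ((Fin m → ℝ) × (Fin r → ℝ)) →ₗ[ℝ] ℝ,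
      ∀ x ∈ BCC X Y, x ≠ Z → f x < f Z :=
  bcc_extreme_point_is_exposed_general m r n X Y Z hZ
end

section
/- For every unit (X_o, Y_o) ∈ T with X_o ≥ 0, the input-oriented BCC efficiency score is well defined: the set S = {θ ∈ ℝ : θ ≥ 0 and (θ·X_o, Y_o) ∈ T} contains 1, has a least element θ* with 0 ≤ θ* ≤ 1, and satisfies [θ*, ∞) ⊆ S. -/
open Finset

/-- The input-oriented BCC efficiency score is well defined: the feasible set
`S = {θ | θ ≥ 0 ∧ (θ • X_o, Y_o) ∈ T}` contains `1`, has a least element `θ*` with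
`0 ≤ θ* ≤ 1`, and satisfies `[θ*, ∞) ⊆ S`. -/
theorem bcc_input_score_well_defined (m r n : ℕ) (hn : 1 ≤ n)
    (X : Fin n → Fin m → ℝ) (Y : Fin n → Fin r → ℝ)
    (hX : ∀ j k, 0 ≤ X j k) (hY : ∀ j i, 0 ≤ Y j i)
    (Xo : Fin m → ℝ) (Yo : Fin r → ℝ)
    (hXo : ∀ k, 0 ≤ Xo k) (ho : (Xo, Yo) ∈ BCC X Y) :
    (1 : ℝ) ∈ {θ : ℝ | 0 ≤ θ ∧ (θ • Xo, Yo) ∈ BCC X Y} ∧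
      ∃ θs : ℝ, IsLeast {θ : ℝ | 0 ≤ θ ∧ (θ • Xo, Yo) ∈ BCC X Y} θs ∧
        0 ≤ θs ∧ θs ≤ 1 ∧
        Set.Ici θs ⊆ {θ : ℝ | 0 ≤ θ ∧ (θ • Xo, Yo) ∈ BCC X Y} := by
  set S : Set ℝ := {θ : ℝ | 0 ≤ θ ∧ (θ • Xo, Yo) ∈ BCC X Y} with hS
  -- 1 ∈ S
  have h1 : (1 : ℝ) ∈ S := by
    refine ⟨zero_le_one, ?_⟩
    simpa using ho
  -- S is upward closed
  have hup : ∀ θ θ' : ℝ, θ ∈ S → θ ≤ θ' → θ' ∈ S := by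
    rintro θ θ' ⟨hθ0, l, hl0, hl1, hlX, hlY⟩ hle
    refine ⟨hθ0.trans hle, l, hl0, hl1, fun k => ?_, hlY⟩
    have := hlX k
    simp only [Pi.smul_apply, smul_eq_mul] at this ⊢
    exact this.trans (mul_le_mul_of_nonneg_right hle (hXo k))
  -- the compact certificate set
  set K : Set (ℝ × (Fin n → ℝ)) :=
    {q | q.1 ∈ Set.Icc (0:ℝ) 1} ∩ {q | ∀ j, 0 ≤ q.2 j} ∩ {q | ∑ j, q.2 j = 1} ∩
      {q | ∀ k, ∑ j, q.2 j * X j k ≤ q.1 * Xo k} ∩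
      {q | ∀ i, Yo i ≤ ∑ j, q.2 j * Y j i} with hK
  have hKclosed : IsClosed K := by
    refine (((((isClosed_Icc.preimage continuous_fst)).inter ?_).inter ?_).inter ?_).inter ?_
    · have : {q : ℝ × (Fin n → ℝ) | ∀ j, 0 ≤ q.2 j} = ⋂ j, {q | 0 ≤ q.2 j} := by
        ext q; simp
      rw [this]
      exact isClosed_iInter fun j =>
        isClosed_le continuous_const ((continuous_apply j).comp continuous_snd)
    · exact isClosed_eq (continuous_finset_sum _ fun j _ =>
        (continuous_apply j).comp continuous_snd) continuous_const
    · have : {q : ℝ × (Fin n → ℝ) | ∀ k, ∑ j, q.2 j * X j k ≤ q.1 * Xo k}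
          = ⋂ k, {q | ∑ j, q.2 j * X j k ≤ q.1 * Xo k} := by ext q; simp
      rw [this]
      exact isClosed_iInter fun k =>
        isClosed_le (continuous_finset_sum _ fun j _ =>
          (((continuous_apply j).comp continuous_snd).mul continuous_const))
          (continuous_fst.mul continuous_const)
    · have : {q : ℝ × (Fin n → ℝ) | ∀ i, Yo i ≤ ∑ j, q.2 j * Y j i}
          = ⋂ i, {q | Yo i ≤ ∑ j, q.2 j * Y j i} := by ext q; simp
      rw [this]
      exact isClosed_iInter fun i =>
        isClosed_le continuous_const (continuous_finset_sum _ fun j _ =>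
          (((continuous_apply j).comp continuous_snd).mul continuous_const))
  have hKcompact : IsCompact K := by
    have hbox : IsCompact ((Set.Icc (0:ℝ) 1) ×ˢ (Set.Icc (0 : Fin n → ℝ) 1)) := by
      refine isCompact_Icc.prod ?_
      rw [← Set.pi_univ_Icc]
      exact isCompact_univ_pi fun i => isCompact_Icc
    refine hbox.of_isClosed_subset hKclosed ?_
    rintro ⟨θ, l⟩ ⟨⟨⟨⟨hθ, hl0⟩, hl1⟩, -⟩, -⟩
    refine ⟨hθ, ?_, ?_⟩
    · intro i; exact hl0 i
    · intro i
      calc l i ≤ ∑ j, l j := Finset.single_le_sum (fun j _ => hl0 j) (mem_univ i)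
        _ = 1 := hl1
  -- projection
  set S' : Set ℝ := Prod.fst '' K with hS'
  have hS'compact : IsCompact S' := hKcompact.image continuous_fst
  have hS'ne : S'.Nonempty := by
    obtain ⟨l, hl0, hl1, hlX, hlY⟩ := ho
    exact ⟨1, ⟨1, l⟩, ⟨⟨⟨⟨⟨zero_le_one, le_refl 1⟩, hl0⟩, hl1⟩,
      fun k => by simpa using hlX k⟩, hlY⟩, rfl⟩
  obtain ⟨θs, hθsS', hθslb⟩ := hS'compact.exists_isLeast hS'ne
  obtain ⟨⟨θs', l⟩, ⟨⟨⟨⟨hθsIcc, hl0⟩, hl1⟩, hlX⟩, hlY⟩, rfl⟩ := hθsS'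
  -- θs ∈ S
  have hθsS : θs' ∈ S := by
    refine ⟨hθsIcc.1, l, hl0, hl1, fun k => ?_, hlY⟩
    simpa using hlX k
  have hθs1 : θs' ≤ 1 := by
    apply hθslb
    obtain ⟨l₀, hl₀0, hl₀1, hl₀X, hl₀Y⟩ := ho
    exact ⟨⟨1, l₀⟩, ⟨⟨⟨⟨⟨zero_le_one, le_refl 1⟩, hl₀0⟩, hl₀1⟩,
      fun k => by simpa using hl₀X k⟩, hl₀Y⟩, rfl⟩
  have hlbS : ∀ θ ∈ S, θs' ≤ θ := by
    rintro θ ⟨hθ0, lt, hlt0, hlt1, hltX, hltY⟩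
    rcases le_or_gt θ 1 with hθ1 | hθ1
    · apply hθslb
      refine ⟨⟨θ, lt⟩, ⟨⟨⟨⟨⟨hθ0, hθ1⟩, hlt0⟩, hlt1⟩, fun k => ?_⟩, hltY⟩, rfl⟩
      simpa using hltX k
    · exact hθs1.trans hθ1.le
  exact ⟨h1, θs', ⟨hθsS, hlbS⟩, hθsIcc.1, hθs1,
    fun θ hθ => hup θs' θ hθsS hθ⟩
end

section
/- For every unit (X_o, Y_o) ∈ T with Y_o ≥ 0 and Y_o ≠ 0, the output-oriented BCC efficiency score is well defined: the set S = {η ∈ ℝ : η ≥ 1 and (X_o, η·Y_o) ∈ T} contains 1, is bounded above, and has a greatest element η* with η* ≥ 1. -/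
open Finset

/-- The output-oriented BCC efficiency score is well defined: the feasible set
`S = {η | η ≥ 1 ∧ (X_o, η • Y_o) ∈ T}` contains `1`, is bounded above, and has a greatest
element `η* ≥ 1`. -/
theorem bcc_output_score_well_defined (m r n : ℕ) (hn : 1 ≤ n)
    (X : Fin n → Fin m → ℝ) (Y : Fin n → Fin r → ℝ)
    (hX : ∀ j k, 0 ≤ X j k) (hY : ∀ j i, 0 ≤ Y j i)
    (Xo : Fin m → ℝ) (Yo : Fin r → ℝ)
    (hYo : ∀ i, 0 ≤ Yo i) (hYo' : Yo ≠ 0) (ho : (Xo, Yo) ∈ BCC X Y) :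
    (1 : ℝ) ∈ {η : ℝ | 1 ≤ η ∧ (Xo, η • Yo) ∈ BCC X Y} ∧
      BddAbove {η : ℝ | 1 ≤ η ∧ (Xo, η • Yo) ∈ BCC X Y} ∧
      ∃ ηs : ℝ, IsGreatest {η : ℝ | 1 ≤ η ∧ (Xo, η • Yo) ∈ BCC X Y} ηs ∧ 1 ≤ ηs := by
  -- index with positive output
  obtain ⟨i0, hi0⟩ : ∃ i, 0 < Yo i := by
    by_contra h
    push_neg at h
    exact hYo' (funext fun i => le_antisymm (h i) (hYo i))
  set S : Set ℝ := {η : ℝ | 1 ≤ η ∧ (Xo, η • Yo) ∈ BCC X Y} with hS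
  -- 1 ∈ S
  have h1 : (1 : ℝ) ∈ S := by
    refine ⟨le_refl 1, ?_⟩
    simpa using ho
  -- the auxiliary compact set
  set C : Set (ℝ × (Fin n → ℝ)) :=
    {p | 1 ≤ p.1 ∧ (∀ j, 0 ≤ p.2 j) ∧ (∑ j, p.2 j = 1) ∧
      (∀ k, ∑ j, p.2 j * X j k ≤ Xo k) ∧ (∀ i, p.1 * Yo i ≤ ∑ j, p.2 j * Y j i)} with hCdef
  have hSC : S = Prod.fst '' C := by
    ext η
    constructor
    · rintro ⟨hη, l, hl0, hl1, hlX, hlY⟩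
      exact ⟨(η, l), ⟨hη, hl0, hl1, hlX, fun i => by simpa using hlY i⟩, rfl⟩
    · rintro ⟨⟨η', l⟩, ⟨hη, hl0, hl1, hlX, hlY⟩, rfl⟩
      exact ⟨hη, l, hl0, hl1, hlX, fun i => by simpa using hlY i⟩
  -- C is closed
  have hCclosed : IsClosed C := by
    have h1c : IsClosed {p : ℝ × (Fin n → ℝ) | 1 ≤ p.1} :=
      isClosed_le continuous_const continuous_fst
    have h2c : IsClosed {p : ℝ × (Fin n → ℝ) | ∀ j, 0 ≤ p.2 j} := by
      have : {p : ℝ × (Fin n → ℝ) | ∀ j, 0 ≤ p.2 j} = ⋂ j, {p | 0 ≤ p.2 j} := by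
        ext p; simp
      rw [this]
      exact isClosed_iInter fun j =>
        isClosed_le continuous_const ((continuous_apply j).comp continuous_snd)
    have h3c : IsClosed {p : ℝ × (Fin n → ℝ) | ∑ j, p.2 j = 1} := by
      refine isClosed_eq ?_ continuous_const
      exact continuous_finset_sum _ fun j _ => (continuous_apply j).comp continuous_snd
    have h4c : IsClosed {p : ℝ × (Fin n → ℝ) | ∀ k, ∑ j, p.2 j * X j k ≤ Xo k} := by
      have : {p : ℝ × (Fin n → ℝ) | ∀ k, ∑ j, p.2 j * X j k ≤ Xo k}
          = ⋂ k, {p | ∑ j, p.2 j * X j k ≤ Xo k} := by ext p; simp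
      rw [this]
      refine isClosed_iInter fun k => isClosed_le ?_ continuous_const
      exact continuous_finset_sum _ fun j _ =>
        ((continuous_apply j).comp continuous_snd).mul continuous_const
    have h5c : IsClosed {p : ℝ × (Fin n → ℝ) | ∀ i, p.1 * Yo i ≤ ∑ j, p.2 j * Y j i} := by
      have : {p : ℝ × (Fin n → ℝ) | ∀ i, p.1 * Yo i ≤ ∑ j, p.2 j * Y j i}
          = ⋂ i, {p | p.1 * Yo i ≤ ∑ j, p.2 j * Y j i} := by ext p; simp
      rw [this]
      refine isClosed_iInter fun i => isClosed_le (continuous_fst.mul continuous_const) ?_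
      exact continuous_finset_sum _ fun j _ =>
        ((continuous_apply j).comp continuous_snd).mul continuous_const
    have : C = {p : ℝ × (Fin n → ℝ) | 1 ≤ p.1} ∩ {p | ∀ j, 0 ≤ p.2 j} ∩
        {p | ∑ j, p.2 j = 1} ∩ {p | ∀ k, ∑ j, p.2 j * X j k ≤ Xo k} ∩
        {p | ∀ i, p.1 * Yo i ≤ ∑ j, p.2 j * Y j i} := by
      ext p; simp only [hCdef, Set.mem_setOf_eq, Set.mem_inter_iff]; tauto
    rw [this]
    exact ((((h1c.inter h2c).inter h3c).inter h4c).inter h5c)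
  -- C is bounded
  have hB : ∀ p ∈ C, p.1 ≤ (∑ j, Y j i0) / Yo i0 := by
    rintro ⟨η, l⟩ ⟨hη, hl0, hl1, _, hlY⟩
    rw [le_div_iff₀ hi0]
    calc η * Yo i0 ≤ ∑ j, l j * Y j i0 := hlY i0
      _ ≤ ∑ j, 1 * Y j i0 := by
          refine Finset.sum_le_sum fun j _ => ?_
          have hlj : l j ≤ 1 := by
            rw [← hl1]
            exact Finset.single_le_sum (fun j _ => hl0 j) (Finset.mem_univ j)
          exact mul_le_mul_of_nonneg_right hlj (hY j i0)
      _ = ∑ j, Y j i0 := by simp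
  have hCbdd : Bornology.IsBounded C := by
    have hsub : C ⊆ (Set.Icc (1 : ℝ) ((∑ j, Y j i0) / Yo i0)) ×ˢ
        (Set.Icc (0 : Fin n → ℝ) 1) := by
      rintro ⟨η, l⟩ hp
      obtain ⟨hη, hl0, hl1, -, -⟩ := id hp
      refine ⟨⟨hη, hB _ hp⟩, fun j => hl0 j, fun j => ?_⟩
      show l j ≤ 1
      rw [← hl1]
      exact Finset.single_le_sum (fun j _ => hl0 j) (Finset.mem_univ j)
    exact (Bornology.IsBounded.prod (Metric.isBounded_Icc _ _) (Metric.isBounded_Icc _ _)).subset hsub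
  have hCcompact : IsCompact C := Metric.isCompact_of_isClosed_isBounded hCclosed hCbdd
  have hScompact : IsCompact S := by
    rw [hSC]; exact hCcompact.image continuous_fst
  have hSne : S.Nonempty := ⟨1, h1⟩
  obtain ⟨ηs, hηsS, hηsub⟩ := hScompact.exists_isGreatest hSne
  exact ⟨h1, ⟨ηs, hηsub⟩, ηs, ⟨hηsS, hηsub⟩, hηsS.1⟩
end
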